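/- arXiv:2206.07663 — 3 statements merged into one kernel-verified Lean document; each statement's English description precedes it below -/
import Mathlib

section
/- Let ξ₁,…,ξₙ be iid Laplace(0,b) random variables, b > 0. Then for all ε ≥ 0, P(|(1/n)∑ᵢ ξᵢ| ≥ ε) ≤ 2·max{exp(−nε²/(16b²)), exp(−nε/(2b))}. -/
open MeasureTheory ProbabilityTheory
open scoped ENNReal

/-- The Laplace(0,b) distribution, with Lebesgue density `(1/(2b))·exp(−|x|/b)`. -/
noncomputable def laplaceMeasure (b : ℝ) : Measure ℝ :=
  volume.withDensity fun x => ENNReal.ofReal ((1 / (2 * b)) * Real.exp (-|x| / b))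

/-!
The Laplace(0,b) law has moment generating function `(1 - t²b²)⁻¹` for `|t| < 1/b`, so by
independence the sum `S` of the `ξᵢ` has moment generating function `(1 - t²b²)⁻ⁿ`, and the
Chernoff bound applied to both tails gives `P(|S| ≥ nε) ≤ 2 (e^{-tε} (1 - t²b²)⁻¹)ⁿ`.
In the scale-free variables `x = ε/b`, `s = tb` it remains to find `s ∈ [0, 1)` with
`e^{-sx} (1 - s²)⁻¹ ≤ max (e^{-x²/16}) (e^{-x/2})`: bounding `(1 - u)⁻¹ ≤ e^{u/(1-u)}`,
`s = x/8` works for `x ≤ 4` and `s = 3/5` for `x > 4`.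
-/

open Real Set

section TwoSidedExponential

variable {c t : ℝ}

lemma exp_mul_sub_mul_abs_eqOn_Iic :
    EqOn (fun x => exp (t * x - c * |x|)) (fun x => exp ((t + c) * x)) (Iic 0) := by
  intro x (hx : x ≤ 0)
  simp only [abs_of_nonpos hx]
  ring_nf

lemma exp_mul_sub_mul_abs_eqOn_Ioi :
    EqOn (fun x => exp (t * x - c * |x|)) (fun x => exp ((t - c) * x)) (Ioi 0) := by
  intro x (hx : 0 < x)
  simp only [abs_of_pos hx]
  ring_nf

lemma integrableOn_exp_mul_sub_mul_abs_Iic (ht : -c < t) :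
    IntegrableOn (fun x => exp (t * x - c * |x|)) (Iic 0) :=
  (integrableOn_exp_mul_Iic (by linarith) 0).congr_fun exp_mul_sub_mul_abs_eqOn_Iic.symm
    measurableSet_Iic

lemma integrableOn_exp_mul_sub_mul_abs_Ioi (ht : t < c) :
    IntegrableOn (fun x => exp (t * x - c * |x|)) (Ioi 0) :=
  (integrableOn_exp_mul_Ioi (by linarith) 0).congr_fun exp_mul_sub_mul_abs_eqOn_Ioi.symm
    measurableSet_Ioi

lemma integrable_exp_mul_sub_mul_abs (ht : |t| < c) :
    Integrable (fun x => exp (t * x - c * |x|)) := by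
  rw [abs_lt] at ht
  rw [← integrableOn_univ, ← Iic_union_Ioi (a := 0)]
  exact (integrableOn_exp_mul_sub_mul_abs_Iic ht.1).union
    (integrableOn_exp_mul_sub_mul_abs_Ioi ht.2)

lemma integral_exp_mul_sub_mul_abs (ht : |t| < c) :
    ∫ x, exp (t * x - c * |x|) = 2 * c / (c ^ 2 - t ^ 2) := by
  rw [abs_lt] at ht
  have hplus : t + c ≠ 0 := by linarith
  have hminus : t - c ≠ 0 := by linarith
  have hsq : c ^ 2 - t ^ 2 ≠ 0 := by nlinarith
  rw [← intervalIntegral.integral_Iic_add_Ioi (integrableOn_exp_mul_sub_mul_abs_Iic ht.1)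
      (integrableOn_exp_mul_sub_mul_abs_Ioi ht.2),
    setIntegral_congr_fun measurableSet_Iic exp_mul_sub_mul_abs_eqOn_Iic,
    setIntegral_congr_fun measurableSet_Ioi exp_mul_sub_mul_abs_eqOn_Ioi,
    integral_exp_mul_Iic (by linarith), integral_exp_mul_Ioi (by linarith)]
  simp only [mul_zero, exp_zero]
  field_simp
  ring

end TwoSidedExponential

section LaplaceMGF

variable {b t : ℝ}

lemma measurable_laplace_density (b : ℝ) :
    Measurable fun x : ℝ => ENNReal.ofReal ((1 / (2 * b)) * exp (-|x| / b)) := by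
  fun_prop

lemma laplace_density_smul_exp (hb : 0 < b) (x : ℝ) :
    (ENNReal.ofReal ((1 / (2 * b)) * exp (-|x| / b))).toReal • exp (t * x)
      = (2 * b)⁻¹ * exp (t * x - b⁻¹ * |x|) := by
  rw [ENNReal.toReal_ofReal (by positivity), smul_eq_mul, mul_assoc, ← exp_add]
  ring_nf

lemma integrable_exp_mul_laplaceMeasure (hb : 0 < b) (ht : |t| < b⁻¹) :
    Integrable (fun x => exp (t * x)) (laplaceMeasure b) := by
  rw [laplaceMeasure, integrable_withDensity_iff_integrable_smul' (measurable_laplace_density b)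
    (ae_of_all _ fun _ => ENNReal.ofReal_lt_top)]
  simp_rw [laplace_density_smul_exp hb]
  exact (integrable_exp_mul_sub_mul_abs ht).const_mul _

lemma mgf_id_laplaceMeasure (hb : 0 < b) (ht : |t| < b⁻¹) :
    mgf id (laplaceMeasure b) t = (1 - t ^ 2 * b ^ 2)⁻¹ := by
  rw [mgf, laplaceMeasure, integral_withDensity_eq_integral_toReal_smul
    (measurable_laplace_density b) (ae_of_all _ fun _ => ENNReal.ofReal_lt_top)]
  simp_rw [id, laplace_density_smul_exp hb]
  rw [integral_const_mul, integral_exp_mul_sub_mul_abs ht]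
  field_simp

end LaplaceMGF

section LaplaceSum

variable {Ω ι : Type*} [MeasurableSpace Ω] {P : Measure Ω} {b t : ℝ}

lemma integrable_exp_mul_of_map_eq_laplaceMeasure {X : Ω → ℝ} (hX : Measurable X)
    (hlaw : P.map X = laplaceMeasure b) (hb : 0 < b) (ht : |t| < b⁻¹) :
    Integrable (fun ω => exp (t * X ω)) P :=
  (integrable_map_measure (g := fun x => exp (t * x)) (by fun_prop) hX.aemeasurable).mp
    (hlaw ▸ integrable_exp_mul_laplaceMeasure hb ht)

lemma mgf_of_map_eq_laplaceMeasure {X : Ω → ℝ} (hX : Measurable X)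
    (hlaw : P.map X = laplaceMeasure b) (hb : 0 < b) (ht : |t| < b⁻¹) :
    mgf X P t = (1 - t ^ 2 * b ^ 2)⁻¹ := by
  rw [← mgf_id_map hX.aemeasurable, hlaw, mgf_id_laplaceMeasure hb ht]

variable [Fintype ι] {ξ : ι → Ω → ℝ}

lemma ProbabilityTheory.iIndepFun.integrable_exp_mul_sum_of_laplace [IsFiniteMeasure P]
    (hindep : iIndepFun ξ P) (hmeas : ∀ i, Measurable (ξ i))
    (hlaw : ∀ i, P.map (ξ i) = laplaceMeasure b) (hb : 0 < b) (ht : |t| < b⁻¹) :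
    Integrable (fun ω => exp (t * (∑ i, ξ i) ω)) P :=
  hindep.integrable_exp_mul_sum hmeas fun i _ =>
    integrable_exp_mul_of_map_eq_laplaceMeasure (hmeas i) (hlaw i) hb ht

lemma ProbabilityTheory.iIndepFun.mgf_sum_of_laplace (hindep : iIndepFun ξ P)
    (hmeas : ∀ i, Measurable (ξ i)) (hlaw : ∀ i, P.map (ξ i) = laplaceMeasure b) (hb : 0 < b)
    (ht : |t| < b⁻¹) :
    mgf (∑ i, ξ i) P t = (1 - t ^ 2 * b ^ 2)⁻¹ ^ Fintype.card ι := by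
  rw [hindep.mgf_sum hmeas, Finset.prod_eq_pow_card
    fun i _ => mgf_of_map_eq_laplaceMeasure (hmeas i) (hlaw i) hb ht, Finset.card_univ]

end LaplaceSum

lemma measureReal_abs_ge_le_exp_mul_mgf {Ω : Type*} [MeasurableSpace Ω] {μ : Measure Ω}
    [IsFiniteMeasure μ] {X : Ω → ℝ} {t : ℝ} (ε : ℝ) (ht : 0 ≤ t)
    (h_int_pos : Integrable (fun ω => exp (t * X ω)) μ)
    (h_int_neg : Integrable (fun ω => exp (-t * X ω)) μ) :
    μ.real {ω | ε ≤ |X ω|} ≤ exp (-t * ε) * (mgf X μ t + mgf X μ (-t)) := by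
  have hsplit : {ω | ε ≤ |X ω|} = {ω | ε ≤ X ω} ∪ {ω | X ω ≤ -ε} := by
    ext ω
    simp only [mem_ofPred_eq, mem_union, le_abs']
    tauto
  calc μ.real {ω | ε ≤ |X ω|}
      ≤ μ.real {ω | ε ≤ X ω} + μ.real {ω | X ω ≤ -ε} :=
        hsplit ▸ measureReal_union_le _ _
    _ ≤ exp (-t * ε) * mgf X μ t + exp (-(-t) * -ε) * mgf X μ (-t) :=
        add_le_add (measure_ge_le_exp_mul_mgf ε ht h_int_pos)
          (measure_le_le_exp_mul_mgf (-ε) (neg_nonpos.mpr ht) h_int_neg)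
    _ = exp (-t * ε) * (mgf X μ t + mgf X μ (-t)) := by ring_nf

lemma inv_one_sub_le_exp_div {u : ℝ} (hu : u < 1) : (1 - u)⁻¹ ≤ exp (u / (1 - u)) :=
  calc (1 - u)⁻¹ = u / (1 - u) + 1 := by field_simp [(sub_pos.mpr hu).ne']; ring
    _ ≤ exp (u / (1 - u)) := add_one_le_exp _

lemma exists_inv_one_sub_sq_mul_exp_neg_le {x : ℝ} (hx : 0 ≤ x) :
    ∃ s, 0 ≤ s ∧ s < 1 ∧
      (1 - s ^ 2)⁻¹ * exp (-(s * x)) ≤ max (exp (-(x ^ 2 / 16))) (exp (-(x / 2))) := by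
  suffices ∃ s, 0 ≤ s ∧ s < 1 ∧ (s ^ 2 / (1 - s ^ 2) - s * x ≤ -(x ^ 2 / 16) ∨
      s ^ 2 / (1 - s ^ 2) - s * x ≤ -(x / 2)) by
    obtain ⟨s, hs0, hs1, hexponent⟩ := this
    refine ⟨s, hs0, hs1, ?_⟩
    calc (1 - s ^ 2)⁻¹ * exp (-(s * x))
        ≤ exp (s ^ 2 / (1 - s ^ 2)) * exp (-(s * x)) := by
          gcongr
          exact inv_one_sub_le_exp_div (by nlinarith)
      _ = exp (s ^ 2 / (1 - s ^ 2) - s * x) := by rw [← exp_add, ← sub_eq_add_neg]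
      _ ≤ max (exp (-(x ^ 2 / 16))) (exp (-(x / 2))) := by
          rcases hexponent with h | h
          · exact le_max_of_le_left (exp_le_exp.mpr h)
          · exact le_max_of_le_right (exp_le_exp.mpr h)
  rcases le_or_gt x 4 with hx4 | hx4
  · refine ⟨x / 8, by positivity, by linarith, Or.inl ?_⟩
    have hx16 : x ^ 2 ≤ 16 := by nlinarith
    rw [sub_le_iff_le_add, div_le_iff₀ (by nlinarith)]
    nlinarith [mul_nonneg (sq_nonneg x) (sub_nonneg.mpr hx16)]
  · refine ⟨3 / 5, by norm_num, by norm_num, ?_⟩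
    rcases le_or_gt x 8 with hx8 | hx8
    · left
      norm_num
      nlinarith
    · right
      norm_num
      linarith

lemma exists_laplace_chernoff_parameter {b ε : ℝ} (hb : 0 < b) (hε : 0 ≤ ε) (n : ℕ) :
    ∃ t, 0 ≤ t ∧ |t| < b⁻¹ ∧ exp (-t * (n * ε)) * (1 - t ^ 2 * b ^ 2)⁻¹ ^ n
      ≤ max (exp (-(n * ε ^ 2) / (16 * b ^ 2))) (exp (-(n * ε) / (2 * b))) := by
  obtain ⟨s, hs0, hs1, hs⟩ := exists_inv_one_sub_sq_mul_exp_neg_le (div_nonneg hε hb.le)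
  refine ⟨s / b, by positivity, ?_, ?_⟩
  · rwa [abs_of_nonneg (by positivity), div_lt_iff₀ hb, inv_mul_cancel₀ hb.ne']
  have hs2 : s ^ 2 < 1 := by nlinarith
  calc exp (-(s / b) * (n * ε)) * (1 - (s / b) ^ 2 * b ^ 2)⁻¹ ^ n
      = ((1 - s ^ 2)⁻¹ * exp (-(s * (ε / b)))) ^ n := by
        rw [div_pow, div_mul_cancel₀ _ (by positivity), mul_pow, ← exp_nat_mul, mul_comm]
        ring_nf
    _ ≤ max (exp (-((ε / b) ^ 2 / 16))) (exp (-(ε / b / 2))) ^ n :=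
        pow_le_pow_left₀ (by have := sub_pos.mpr hs2; positivity) hs n
    _ = max (exp (-(n * ε ^ 2) / (16 * b ^ 2))) (exp (-(n * ε) / (2 * b))) := by
        rw [pow_left_monotoneOn.map_max (exp_pos _).le (exp_pos _).le, ← exp_nat_mul,
          ← exp_nat_mul]
        ring_nf

theorem laplace_average_tail_bound_general
    {Ω : Type*} [MeasurableSpace Ω] (P : Measure Ω) [IsProbabilityMeasure P]
    (n : ℕ) (b : ℝ) (hb : 0 < b) (ξ : Fin n → Ω → ℝ)
    (hmeas : ∀ i, Measurable (ξ i))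
    (hindep : iIndepFun ξ P)
    (hlaw : ∀ i, P.map (ξ i) = laplaceMeasure b)
    (ε : ℝ) (hε : 0 ≤ ε) :
    P {ω | ε ≤ |(1 / (n : ℝ)) * ∑ i, ξ i ω|}
      ≤ ENNReal.ofReal (2 * max (Real.exp (-(n * ε ^ 2) / (16 * b ^ 2)))
          (Real.exp (-(n * ε) / (2 * b)))) := by
  obtain ⟨t, ht0, ht, hbound⟩ := exists_laplace_chernoff_parameter hb hε n
  have ht' : |-t| < b⁻¹ := by rwa [abs_neg]
  have hevent :
    {ω | ε ≤ |(1 / (n : ℝ)) * ∑ i, ξ i ω|} ⊆ {ω | n * ε ≤ |(∑ i, ξ i) ω|} := by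
    intro ω hω
    rw [mem_ofPred_eq, abs_mul, abs_of_nonneg (by positivity), one_div_mul_eq_div] at hω
    simpa [mul_comm] using mul_le_of_le_div₀ (abs_nonneg _) n.cast_nonneg hω
  have hchernoff := measureReal_abs_ge_le_exp_mul_mgf (n * ε) ht0
    (hindep.integrable_exp_mul_sum_of_laplace hmeas hlaw hb ht)
    (hindep.integrable_exp_mul_sum_of_laplace hmeas hlaw hb ht')
  rw [hindep.mgf_sum_of_laplace hmeas hlaw hb ht, hindep.mgf_sum_of_laplace hmeas hlaw hb ht',
    neg_sq, Fintype.card_fin, ← two_mul, mul_left_comm] at hchernoff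
  calc P {ω | ε ≤ |(1 / (n : ℝ)) * ∑ i, ξ i ω|}
      ≤ P {ω | n * ε ≤ |(∑ i, ξ i) ω|} := measure_mono hevent
    _ = ENNReal.ofReal (P.real {ω | n * ε ≤ |(∑ i, ξ i) ω|}) :=
        (ofReal_measureReal (measure_ne_top _ _)).symm
    _ ≤ _ := ENNReal.ofReal_le_ofReal
        (hchernoff.trans (mul_le_mul_of_nonneg_left hbound zero_le_two))

/-- **Tail bound for Laplace averages.** If `ξ₁,…,ξₙ` are iid Laplace(0,b),
`b > 0`, then for all `ε ≥ 0`,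
`P(|(1/n)∑ᵢ ξᵢ| ≥ ε) ≤ 2·max{exp(−nε²/(16b²)), exp(−nε/(2b))}`. -/
theorem laplace_average_tail_bound
    {Ω : Type*} [MeasurableSpace Ω] (P : Measure Ω) [IsProbabilityMeasure P]
    (n : ℕ) (hn : 0 < n) (b : ℝ) (hb : 0 < b) (ξ : Fin n → Ω → ℝ)
    (hmeas : ∀ i, Measurable (ξ i))
    (hindep : iIndepFun ξ P)
    (hlaw : ∀ i, P.map (ξ i) = laplaceMeasure b)
    (ε : ℝ) (hε : 0 ≤ ε) :
    P {ω | ε ≤ |(1 / (n : ℝ)) * ∑ i, ξ i ω|}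
      ≤ ENNReal.ofReal (2 * max (Real.exp (-(n * ε ^ 2) / (16 * b ^ 2)))
          (Real.exp (-(n * ε) / (2 * b)))) :=
  laplace_average_tail_bound_general P n b hb ξ hmeas hindep hlaw ε hε
end

section
/- Let U₁,…,Uₙ be independent real random variables with E[Uᵢ] = 0. Then for every real m ≥ 2 there exists a constant c_m depending only on m such that E[ |∑ᵢ Uᵢ|^m ] ≤ c_m · n^{m/2 − 1} · ∑ᵢ E[|Uᵢ|^m]. -/
/-!
For `m ≥ 2` a second-order expansion of `t ↦ |t|^m` gives, for all real `x, y`,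
`|x + y|^m ≤ |x|^m + m x |x|^(m-2) y + R (|x|^(m-2) y² + |y|^m)`, with `R` depending only
on `m`.
Taking expectations with `x = S` and `y = U` independent and `U` centred, the linear term
vanishes, and Lyapunov's inequality bounds `E|S|^(m-2) E U²` by
`(E|S|^m)^(1-2/m) (E|U|^m)^(2/m)`. Adding the `Uᵢ` one at a time and letting `M` be the
largest `m`-th moment of a partial sum, this gives `M ≤ R (M^(1-2/m) H + B)` where
`B = ∑ E|Uᵢ|^m` and, by Hölder, `H = ∑ (E|Uᵢ|^m)^(2/m) ≤ (n^(m/2-1) B)^(2/m)`.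
This self-bounding inequality forces `M ≤ c n^(m/2-1) B`.
-/

open MeasureTheory ProbabilityTheory
open scoped ENNReal

namespace Real

lemma abs_one_add_rpow_sub_one_le {m t : ℝ} (hm : 2 ≤ m) (ht : |t| ≤ 1 / 2) :
    |(1 + t) ^ (m - 1) - 1| ≤ (m - 1) * (3 / 2) ^ (m - 2) * |t| := by
  have hderiv : ∀ s ∈ Set.Icc (-(1 / 2) : ℝ) (1 / 2),
      HasDerivWithinAt (fun s => (1 + s) ^ (m - 1)) (1 * (m - 1) * (1 + s) ^ (m - 1 - 1))
        (Set.Icc (-(1 / 2)) (1 / 2)) s := fun s _ =>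
    (((hasDerivAt_id s).const_add 1).rpow_const (Or.inr (by linarith))).hasDerivWithinAt
  have hbound : ∀ s ∈ Set.Icc (-(1 / 2) : ℝ) (1 / 2),
      ‖1 * (m - 1) * (1 + s) ^ (m - 1 - 1)‖ ≤ (m - 1) * (3 / 2) ^ (m - 2) := by
    rintro s ⟨hs_lo, hs_hi⟩
    rw [one_mul, norm_mul, norm_of_nonneg (by linarith),
      norm_of_nonneg (rpow_nonneg (by linarith) _), show m - 1 - 1 = m - 2 by ring]
    gcongr <;> linarith
  simpa using (convex_Icc _ _).norm_image_sub_le_of_norm_hasDerivWithin_le hderiv hbound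
    (show (0 : ℝ) ∈ Set.Icc (-(1 / 2)) (1 / 2) by norm_num) (abs_le.1 ht)

lemma one_add_rpow_le {m u : ℝ} (hm : 2 ≤ m) (hu : |u| ≤ 1 / 2) :
    (1 + u) ^ m ≤ 1 + m * u + m * (m - 1) * (3 / 2) ^ (m - 2) * u ^ 2 := by
  set C := (m - 1) * (3 / 2) ^ (m - 2)
  have hC : 0 ≤ C := mul_nonneg (by linarith) (by positivity)
  have hderiv : ∀ t ∈ Set.Icc (-|u|) |u|, HasDerivWithinAt (fun t => (1 + t) ^ m - m * t)
      (1 * m * (1 + t) ^ (m - 1) - m * 1) (Set.Icc (-|u|) |u|) t := fun t _ =>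
    ((((hasDerivAt_id t).const_add 1).rpow_const (Or.inr (by linarith))).sub
      ((hasDerivAt_id t).const_mul m)).hasDerivWithinAt
  have hbound : ∀ t ∈ Set.Icc (-|u|) |u|,
      ‖1 * m * (1 + t) ^ (m - 1) - m * 1‖ ≤ m * C * |u| := by
    intro t ht
    have ht' : |t| ≤ |u| := abs_le.2 ht
    rw [show 1 * m * (1 + t) ^ (m - 1) - m * 1 = m * ((1 + t) ^ (m - 1) - 1) by ring,
      norm_mul, norm_of_nonneg (by linarith), mul_assoc]
    gcongr
    exact (abs_one_add_rpow_sub_one_le hm (ht'.trans hu)).trans (by gcongr)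
  have h := (convex_Icc _ _).norm_image_sub_le_of_norm_hasDerivWithin_le hderiv hbound
    (show (0 : ℝ) ∈ Set.Icc (-|u|) |u| by simp)
    (show u ∈ Set.Icc (-|u|) |u| from abs_le.1 le_rfl)
  simp only [add_zero, one_rpow, mul_zero, sub_zero, norm_eq_abs, mul_assoc,
    abs_mul_abs_self] at h
  nlinarith [le_abs_self ((1 + u) ^ m - m * u - 1)]

lemma abs_mul_mul_abs_rpow_sub_two {m : ℝ} (hm : 2 ≤ m) (x : ℝ) :
    |m * x * |x| ^ (m - 2)| = m * |x| ^ (m - 1) := by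
  rw [abs_mul, abs_mul, abs_of_nonneg (by linarith : 0 ≤ m),
    abs_of_nonneg (rpow_nonneg (abs_nonneg x) _), mul_assoc,
    ← rpow_one_add' (abs_nonneg x) (by linarith), show 1 + (m - 2) = m - 1 by ring]

lemma le_mul_of_le_mul_rpow_add {x A h d p : ℝ} (hp : 0 < p) (hx : 0 ≤ x) (hA : 0 ≤ A)
    (hh : 0 ≤ h) (hhd : h ^ (p / 2) ≤ d) (hself : x ≤ A * (x ^ ((p - 2) / p) * h + d)) :
    x ≤ (2 * A + (2 * A) ^ (p / 2)) * d := by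
  have hd : 0 ≤ d := (rpow_nonneg hh _).trans hhd
  have hc : 0 ≤ (2 * A) ^ (p / 2) * d := by positivity
  rcases le_or_gt x (2 * A * d) with hxd | hxd
  · nlinarith
  have hxpos : 0 < x := lt_of_le_of_lt (by positivity) hxd
  have hsplit : x = x ^ ((p - 2) / p) * x ^ (2 / p) := by
    rw [← rpow_add hxpos, show (p - 2) / p + 2 / p = 1 by field_simp; ring, rpow_one]
  have hroot : x ^ (2 / p) < 2 * A * h := by
    refine lt_of_mul_lt_mul_left (a := x ^ ((p - 2) / p)) ?_ (by positivity)
    rw [← hsplit]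
    nlinarith
  have : x < (2 * A) ^ (p / 2) * d :=
    calc x = (x ^ (2 / p)) ^ (p / 2) := by
          rw [← rpow_mul hx, show 2 / p * (p / 2) = 1 by field_simp, rpow_one]
      _ < (2 * A * h) ^ (p / 2) := by gcongr
      _ = (2 * A) ^ (p / 2) * h ^ (p / 2) := mul_rpow (by positivity) hh
      _ ≤ (2 * A) ^ (p / 2) * d := by gcongr
  nlinarith [mul_nonneg hA hd]

end Real

namespace MeasureTheory

variable {Ω : Type*} [MeasurableSpace Ω] {P : Measure Ω}

lemma MemLp.integrable_abs_rpow [IsFiniteMeasure P] {f : Ω → ℝ} {p q : ℝ}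
    (hf : MemLp f (ENNReal.ofReal p) P) (hq : 0 ≤ q) (hqp : q ≤ p) :
    Integrable (fun ω => |f ω| ^ q) P := by
  simpa [ENNReal.toReal_ofReal hq] using
    (hf.mono_exponent (ENNReal.ofReal_le_ofReal hqp)).integrable_norm_rpow'

lemma integral_abs_rpow_le_rpow_integral_abs_rpow [IsProbabilityMeasure P] {f : Ω → ℝ}
    {p q : ℝ} (hf : MemLp f (ENNReal.ofReal p) P) (hq : 0 ≤ q) (hqp : q ≤ p) :
    ∫ ω, |f ω| ^ q ∂P ≤ (∫ ω, |f ω| ^ p ∂P) ^ (q / p) := by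
  rcases hq.eq_or_lt with rfl | hq
  · simp
  have hp : 0 < p := hq.trans_le hqp
  have hnorm := eLpNorm_le_eLpNorm_of_exponent_le (ENNReal.ofReal_le_ofReal hqp) hf.1 (μ := P)
  rw [(hf.mono_exponent (ENNReal.ofReal_le_ofReal hqp)).eLpNorm_eq_integral_rpow_norm
      (by simpa using hq) ENNReal.ofReal_ne_top,
    hf.eLpNorm_eq_integral_rpow_norm (by simpa using hp) ENNReal.ofReal_ne_top,
    ENNReal.ofReal_le_ofReal_iff (by positivity)] at hnorm
  simp only [ENNReal.toReal_ofReal hq.le, ENNReal.toReal_ofReal hp.le, Real.norm_eq_abs] at hnorm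
  have hq_int : 0 ≤ ∫ ω, |f ω| ^ q ∂P := by positivity
  have hp_int : 0 ≤ ∫ ω, |f ω| ^ p ∂P := by positivity
  have := Real.rpow_le_rpow (by positivity) hnorm hq.le
  rwa [← Real.rpow_mul hq_int, ← Real.rpow_mul hp_int, inv_mul_cancel₀ hq.ne', Real.rpow_one,
    inv_mul_eq_div] at this

end MeasureTheory

namespace Petrov

open Real

/-- The first two terms serve the case `|x| ≤ 2 |y|` of `abs_add_rpow_le`, the last one is the
Taylor coefficient of `one_add_rpow_le`, used when `2 |y| < |x|`. -/
noncomputable def remainderConst (m : ℝ) : ℝ :=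
  3 ^ m + m * 2 ^ (m - 1) + m * (m - 1) * (3 / 2) ^ (m - 2)

section remainderConst

variable {m : ℝ}

lemma three_rpow_add_le_remainderConst (hm : 2 ≤ m) : 3 ^ m + m * 2 ^ (m - 1) ≤ remainderConst m := by
  have : 0 ≤ m * (m - 1) * (3 / 2 : ℝ) ^ (m - 2) :=
    mul_nonneg (mul_nonneg (by linarith) (by linarith)) (by positivity)
  unfold remainderConst
  linarith

lemma taylorCoeff_le_remainderConst (hm : 2 ≤ m) :
    m * (m - 1) * (3 / 2) ^ (m - 2) ≤ remainderConst m := by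
  have : 0 ≤ m * (2 : ℝ) ^ (m - 1) := mul_nonneg (by linarith) (by positivity)
  have : 0 ≤ (3 : ℝ) ^ m := by positivity
  unfold remainderConst
  linarith

lemma remainderConst_pos (hm : 2 ≤ m) : 0 < remainderConst m := by
  have : 0 ≤ m * (2 : ℝ) ^ (m - 1) := mul_nonneg (by linarith) (by positivity)
  exact lt_of_lt_of_le (by positivity) (three_rpow_add_le_remainderConst hm)

end remainderConst

lemma abs_add_rpow_le_of_abs_le_two_mul {m x y : ℝ} (hm : 2 ≤ m) (hxy : |x| ≤ 2 * |y|) :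
    |x + y| ^ m ≤ |x| ^ m + m * x * |x| ^ (m - 2) * y
      + remainderConst m * (|x| ^ (m - 2) * y ^ 2 + |y| ^ m) := by
  have hsum : |x + y| ^ m ≤ 3 ^ m * |y| ^ m := by
    rw [← mul_rpow (by norm_num) (abs_nonneg y)]
    gcongr
    linarith [abs_add_le x y]
  have hlin : |m * x * |x| ^ (m - 2) * y| ≤ m * 2 ^ (m - 1) * |y| ^ m := by
    rw [abs_mul, abs_mul_mul_abs_rpow_sub_two hm, mul_assoc, mul_assoc]
    refine mul_le_mul_of_nonneg_left ?_ (by linarith)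
    calc |x| ^ (m - 1) * |y| ≤ (2 * |y|) ^ (m - 1) * |y| := by gcongr; linarith
      _ = 2 ^ (m - 1) * |y| ^ m := by
        rw [mul_rpow (by norm_num) (abs_nonneg y), mul_assoc,
          ← rpow_add_one' (abs_nonneg y) (by linarith), sub_add_cancel]
  have hquad : 0 ≤ |x| ^ (m - 2) * y ^ 2 := by positivity
  have hxm : 0 ≤ |x| ^ m := by positivity
  have hym : 0 ≤ |y| ^ m := by positivity
  nlinarith [mul_le_mul_of_nonneg_right (three_rpow_add_le_remainderConst hm) hym,
    mul_nonneg (remainderConst_pos hm).le hquad, neg_abs_le (m * x * |x| ^ (m - 2) * y)]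

lemma abs_add_rpow_le_of_two_mul_lt_abs {m x y : ℝ} (hm : 2 ≤ m) (hxy : 2 * |y| < |x|) :
    |x + y| ^ m ≤ |x| ^ m + m * x * |x| ^ (m - 2) * y
      + remainderConst m * (|x| ^ (m - 2) * y ^ 2 + |y| ^ m) := by
  have hx : 0 < |x| := lt_of_le_of_lt (by positivity) hxy
  have hx0 : x ≠ 0 := abs_pos.1 hx
  set u := y / x with hu_def
  have hu : |u| ≤ 1 / 2 := by
    rw [abs_div, div_le_iff₀ hx]
    linarith
  have h1u : 0 < 1 + u := by linarith [neg_abs_le u]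
  have hsplit : |x + y| ^ m = |x| ^ m * (1 + u) ^ m := by
    rw [show x + y = x * (1 + u) by rw [hu_def]; field_simp, abs_mul, abs_of_pos h1u,
      mul_rpow (abs_nonneg x) h1u.le]
  have hxm : |x| ^ m = x ^ 2 * |x| ^ (m - 2) := by
    rw [← sq_abs, ← rpow_two, ← rpow_add hx, add_sub_cancel]
  have hquad : 0 ≤ |x| ^ (m - 2) * y ^ 2 := by positivity
  have hym : 0 ≤ |y| ^ m := by positivity
  calc |x + y| ^ m ≤ |x| ^ m * (1 + m * u + m * (m - 1) * (3 / 2) ^ (m - 2) * u ^ 2) := by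
        rw [hsplit]
        exact mul_le_mul_of_nonneg_left (one_add_rpow_le hm hu) (by positivity)
    _ = |x| ^ m + m * x * |x| ^ (m - 2) * y
          + m * (m - 1) * (3 / 2) ^ (m - 2) * (|x| ^ (m - 2) * y ^ 2) := by
        rw [hxm, hu_def]
        field_simp
    _ ≤ _ := by
        nlinarith [mul_le_mul_of_nonneg_right (taylorCoeff_le_remainderConst hm) hquad,
          mul_nonneg (remainderConst_pos hm).le hym]

lemma abs_add_rpow_le {m : ℝ} (hm : 2 ≤ m) (x y : ℝ) :
    |x + y| ^ m ≤ |x| ^ m + m * x * |x| ^ (m - 2) * y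
      + remainderConst m * (|x| ^ (m - 2) * y ^ 2 + |y| ^ m) := by
  rcases le_or_gt |x| (2 * |y|) with hxy | hxy
  · exact abs_add_rpow_le_of_abs_le_two_mul hm hxy
  · exact abs_add_rpow_le_of_two_mul_lt_abs hm hxy

section Moments

variable {Ω : Type*} [MeasurableSpace Ω] {P : Measure Ω}

lemma integral_abs_add_rpow_le_second_order [IsFiniteMeasure P] {S U : Ω → ℝ} {m : ℝ}
    (hm : 2 ≤ m) (hind : IndepFun S U P) (hS : MemLp S (ENNReal.ofReal m) P)
    (hU : MemLp U (ENNReal.ofReal m) P) (hU0 : ∫ ω, U ω ∂P = 0) :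
    ∫ ω, |S ω + U ω| ^ m ∂P ≤ ∫ ω, |S ω| ^ m ∂P
      + remainderConst m * ((∫ ω, |S ω| ^ (m - 2) ∂P) * (∫ ω, U ω ^ 2 ∂P)
        + ∫ ω, |U ω| ^ m ∂P) := by
  set g : ℝ → ℝ := fun x => m * x * |x| ^ (m - 2)
  have hS_m := hS.integrable_abs_rpow (by linarith) le_rfl
  have hU_m := hU.integrable_abs_rpow (by linarith) le_rfl
  have hS_m2 := hS.integrable_abs_rpow (by linarith) (by linarith : m - 2 ≤ m)
  have hU_1 : Integrable U P :=
    hU.integrable (by simpa using ENNReal.ofReal_le_ofReal (by linarith : 1 ≤ m))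
  have hU_2 : Integrable (fun ω => U ω ^ 2) P :=
    (hU.mono_exponent (by simpa using ENNReal.ofReal_le_ofReal hm)).integrable_sq
  have hgS : Integrable (g ∘ S) P := by
    refine ((hS.integrable_abs_rpow (by linarith) (by linarith : m - 1 ≤ m)).const_mul m).mono'
      ((by fun_prop : Measurable g).comp_aemeasurable hS.1.aemeasurable).aestronglyMeasurable ?_
    filter_upwards with ω
    rw [Function.comp_apply, Real.norm_eq_abs, abs_mul_mul_abs_rpow_sub_two hm]
  have hlin : IndepFun (g ∘ S) U P := hind.comp (by fun_prop) measurable_id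
  have hquad : IndepFun ((fun x => |x| ^ (m - 2)) ∘ S) ((fun x => x ^ 2) ∘ U) P :=
    hind.comp (by fun_prop) (by fun_prop)
  have hlin_int : Integrable (fun ω => g (S ω) * U ω) P := hlin.integrable_mul hgS hU_1
  have hquad_int : Integrable (fun ω => |S ω| ^ (m - 2) * U ω ^ 2) P :=
    hquad.integrable_mul hS_m2 hU_2
  have hlin_zero : ∫ ω, g (S ω) * U ω ∂P = 0 := by
    rw [show (fun ω => g (S ω) * U ω) = (g ∘ S) * U from rfl,
      hlin.integral_mul_eq_mul_integral hgS.1 hU.1, hU0, mul_zero]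
  have hquad_eq : ∫ ω, |S ω| ^ (m - 2) * U ω ^ 2 ∂P
      = (∫ ω, |S ω| ^ (m - 2) ∂P) * ∫ ω, U ω ^ 2 ∂P :=
    hquad.integral_mul_eq_mul_integral hS_m2.1 hU_2.1
  have hfirst : Integrable (fun ω => |S ω| ^ m + g (S ω) * U ω) P := hS_m.add hlin_int
  have hsecond : Integrable (fun ω => |S ω| ^ (m - 2) * U ω ^ 2 + |U ω| ^ m) P :=
    hquad_int.add hU_m
  calc ∫ ω, |S ω + U ω| ^ m ∂P
      ≤ ∫ ω, |S ω| ^ m + g (S ω) * U ω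
          + remainderConst m * (|S ω| ^ (m - 2) * U ω ^ 2 + |U ω| ^ m) ∂P :=
        integral_mono_of_nonneg (.of_forall fun ω => by positivity)
          (hfirst.add (hsecond.const_mul _))
          (.of_forall fun ω => abs_add_rpow_le hm (S ω) (U ω))
    _ = _ := by
        rw [integral_add hfirst (hsecond.const_mul _), integral_add hS_m hlin_int,
          integral_const_mul, integral_add hquad_int hU_m, hlin_zero, hquad_eq, add_zero]

lemma integral_abs_add_rpow_le [IsProbabilityMeasure P] {S U : Ω → ℝ} {m : ℝ} (hm : 2 ≤ m)
    (hind : IndepFun S U P) (hS : MemLp S (ENNReal.ofReal m) P)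
    (hU : MemLp U (ENNReal.ofReal m) P) (hU0 : ∫ ω, U ω ∂P = 0) :
    ∫ ω, |S ω + U ω| ^ m ∂P ≤ ∫ ω, |S ω| ^ m ∂P
      + remainderConst m * ((∫ ω, |S ω| ^ m ∂P) ^ ((m - 2) / m)
        * (∫ ω, |U ω| ^ m ∂P) ^ (2 / m) + ∫ ω, |U ω| ^ m ∂P) := by
  refine (integral_abs_add_rpow_le_second_order hm hind hS hU hU0).trans ?_
  have hS_lyap := integral_abs_rpow_le_rpow_integral_abs_rpow hS (q := m - 2) (by linarith)
    (by linarith)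
  have hU_lyap : ∫ ω, U ω ^ 2 ∂P ≤ (∫ ω, |U ω| ^ m ∂P) ^ (2 / m) := by
    simpa [rpow_two] using
      integral_abs_rpow_le_rpow_integral_abs_rpow hU (q := 2) (by norm_num) hm
  have := (remainderConst_pos hm).le
  gcongr

end Moments

def partialSum {n : ℕ} {α : Type*} [AddCommMonoid α] (f : Fin n → α) (j : ℕ) : α :=
  ∑ i ∈ Finset.univ.filter (fun i : Fin n => (i : ℕ) < j), f i

section partialSum

variable {n : ℕ} {α : Type*} [AddCommMonoid α] (f : Fin n → α)

@[simp]
lemma partialSum_zero : partialSum f 0 = 0 := by simp [partialSum]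

lemma partialSum_succ {j : ℕ} (hj : j < n) :
    partialSum f (j + 1) = partialSum f j + f ⟨j, hj⟩ := by
  have : Finset.univ.filter (fun i : Fin n => (i : ℕ) < j + 1)
      = insert ⟨j, hj⟩ (Finset.univ.filter (fun i : Fin n => (i : ℕ) < j)) := by
    ext i
    simp only [Finset.mem_filter, Finset.mem_univ, true_and, Finset.mem_insert, Fin.ext_iff]
    omega
  rw [partialSum, this, Finset.sum_insert (by simp), add_comm, partialSum]

lemma partialSum_self : partialSum f n = ∑ i, f i := by
  simp [partialSum]

lemma partialSum_le_sum {β : Type*} [AddCommMonoid β] [PartialOrder β] [IsOrderedAddMonoid β]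
    {g : Fin n → β} (hg : ∀ i, 0 ≤ g i) (j : ℕ) : partialSum g j ≤ ∑ i, g i :=
  Finset.sum_le_sum_of_subset_of_nonneg (Finset.filter_subset _ _) fun i _ _ => hg i

end partialSum

section Sums

variable {Ω : Type*} [MeasurableSpace Ω] {P : Measure Ω} [IsProbabilityMeasure P]
  {n : ℕ} {U : Fin n → Ω → ℝ} {m : ℝ}

lemma integral_abs_partialSum_rpow_le (hm : 2 ≤ m) (hmeas : ∀ i, Measurable (U i))
    (hind : iIndepFun U P) (hU : ∀ i, MemLp (U i) (ENNReal.ofReal m) P)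
    (hU0 : ∀ i, ∫ ω, U i ω ∂P = 0) {M : ℝ}
    (hM : ∀ j ≤ n, ∫ ω, |partialSum U j ω| ^ m ∂P ≤ M) {j : ℕ} (hj : j ≤ n) :
    ∫ ω, |partialSum U j ω| ^ m ∂P ≤ partialSum (fun i => remainderConst m *
      (M ^ ((m - 2) / m) * (∫ ω, |U i ω| ^ m ∂P) ^ (2 / m)
        + ∫ ω, |U i ω| ^ m ∂P)) j := by
  induction j with
  | zero => simp [zero_rpow (by linarith : m ≠ 0)]
  | succ j ih =>
    have hjn : j < n := hj
    have hindep : IndepFun (partialSum U j) (U ⟨j, hjn⟩) P :=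
      hind.indepFun_finsetSum_of_notMem hmeas (by simp)
    have hmem : MemLp (partialSum U j) (ENNReal.ofReal m) P :=
      memLp_finsetSum' _ fun i _ => hU i
    have := (remainderConst_pos hm).le
    rw [partialSum_succ U hjn, partialSum_succ _ hjn]
    refine (integral_abs_add_rpow_le hm hindep hmem (hU _) (hU0 _)).trans ?_
    gcongr
    · exact ih hjn.le
    · exact hM j hjn.le

lemma exists_integral_abs_sum_rpow_le_self_bound (hm : 2 ≤ m) (hmeas : ∀ i, Measurable (U i))
    (hind : iIndepFun U P) (hU : ∀ i, MemLp (U i) (ENNReal.ofReal m) P)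
    (hU0 : ∀ i, ∫ ω, U i ω ∂P = 0) :
    ∃ M, 0 ≤ M ∧ ∫ ω, |∑ i, U i ω| ^ m ∂P ≤ M ∧
      M ≤ remainderConst m * (M ^ ((m - 2) / m) * ∑ i, (∫ ω, |U i ω| ^ m ∂P) ^ (2 / m)
        + ∑ i, ∫ ω, |U i ω| ^ m ∂P) := by
  set a : ℕ → ℝ := fun j => ∫ ω, |partialSum U j ω| ^ m ∂P
  obtain ⟨j₀, hj₀, hmax⟩ := (Finset.range (n + 1)).exists_max_image a ⟨0, by simp⟩
  have hM : ∀ j ≤ n, a j ≤ a j₀ := fun j hj => hmax j (by simp; omega)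
  refine ⟨a j₀, by positivity, ?_, ?_⟩
  · simpa [a, partialSum_self, Finset.sum_apply] using hM n le_rfl
  · have := (remainderConst_pos hm).le
    refine (integral_abs_partialSum_rpow_le hm hmeas hind hU hU0 hM
      (Nat.lt_succ_iff.1 (Finset.mem_range.1 hj₀))).trans ?_
    refine (partialSum_le_sum (fun i => by positivity) _).trans_eq ?_
    rw [← Finset.mul_sum, Finset.sum_add_distrib, ← Finset.mul_sum]

end Sums

end Petrov

open Petrov

/-- **Petrov's moment inequality** (Petrov 1995, Theorem 2.10). For every real
`m ≥ 2` there exists a constant `c_m`, depending only on `m`, such that for any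
independent centred real random variables `U₁,…,Uₙ` (with finite `m`-th absolute
moments), `E|∑ᵢ Uᵢ|^m ≤ c_m · n^{m/2 − 1} · ∑ᵢ E|Uᵢ|^m`. -/
theorem petrov_moment_inequality (m : ℝ) (hm : 2 ≤ m) :
    ∃ c : ℝ, 0 < c ∧
      ∀ (Ω : Type) (_ : MeasurableSpace Ω) (P : Measure Ω),
        IsProbabilityMeasure P →
        ∀ (n : ℕ) (U : Fin n → Ω → ℝ),
          (∀ i, Measurable (U i)) →
          iIndepFun U P →
          (∀ i, Integrable (fun ω => |U i ω| ^ m) P) →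
          (∀ i, (∫ ω, U i ω ∂P) = 0) →
          (∫ ω, |∑ i, U i ω| ^ m ∂P)
            ≤ c * (n : ℝ) ^ (m / 2 - 1) * ∑ i, ∫ ω, |U i ω| ^ m ∂P := by
  have hR := remainderConst_pos hm
  refine ⟨2 * remainderConst m + (2 * remainderConst m) ^ (m / 2), by positivity, ?_⟩
  intro Ω _ P _ n U hmeas hind hint hU0
  rcases n.eq_zero_or_pos with rfl | hn
  · simp [Real.zero_rpow (by linarith : m ≠ 0)]
  have hU : ∀ i, MemLp (U i) (ENNReal.ofReal m) P := fun i =>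
    (integrable_norm_rpow_iff (hmeas i).aestronglyMeasurable (by simp; linarith)
      ENNReal.ofReal_ne_top).1
      (by simpa [ENNReal.toReal_ofReal (by linarith : 0 ≤ m)] using hint i)
  obtain ⟨M, hM0, hsum_le, hself⟩ :=
    exists_integral_abs_sum_rpow_le_self_bound hm hmeas hind hU hU0
  set b : Fin n → ℝ := fun i => ∫ ω, |U i ω| ^ m ∂P
  have hb : ∀ i, 0 ≤ b i := fun i => by positivity
  have hB : ∑ i, b i ≤ (n : ℝ) ^ (m / 2 - 1) * ∑ i, b i :=
    le_mul_of_one_le_left (Finset.sum_nonneg fun i _ => hb i)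
      (Real.one_le_rpow (by exact_mod_cast hn) (by linarith))
  have hholder : (∑ i, b i ^ (2 / m)) ^ (m / 2) ≤ (n : ℝ) ^ (m / 2 - 1) * ∑ i, b i := by
    have := Real.rpow_sum_le_const_mul_sum_rpow_of_nonneg (s := Finset.univ)
      (f := fun i => b i ^ (2 / m)) (by linarith : 1 ≤ m / 2) fun i _ => by positivity
    simpa [← Real.rpow_mul (hb _), show 2 / m * (m / 2) = 1 by field_simp] using this
  calc ∫ ω, |∑ i, U i ω| ^ m ∂P ≤ M := hsum_le
    _ ≤ (2 * remainderConst m + (2 * remainderConst m) ^ (m / 2))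
        * ((n : ℝ) ^ (m / 2 - 1) * ∑ i, b i) :=
      Real.le_mul_of_le_mul_rpow_add (by linarith) hM0 hR.le (by positivity) hholder
        (hself.trans (by gcongr))
    _ = _ := by ring
end

section
/- Key adaptation argument: Let ℋ be a finite set of positive bandwidths, and for each h ∈ ℋ let f̂_h(t), f_h(t) ∈ ℝ, V̂(h) ≥ 0, V(h) ≥ 0 be given. Define Â(h) := max_{η∈ℋ, η≤h} ( |f̂_h(t) − f̂_η(t)|² − (V̂(h)+V̂(η)) )₊ and let ĥ ∈ argmin_{h∈ℋ}(Â(h)+V̂(h)). Define bias²(h) := sup_{η≤h}|f_η(t) − f(t)|². Then for every h ∈ ℋ: |f̂_ĥ(t) − f(t)|² ≤ 16·bias²(h) + (4/3)V(h) + 4V̂(h) + 28·max_{η∈ℋ}( |f_η(t) − f̂_η(t)|² − V(η)/3 )₊ + 8·max_{η∈ℋ}( V(η) − V̂(η) )₊. -/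
open scoped BigOperators


set_option maxHeartbeats 1000000 in
private lemma core_lemma {D β δ R1 R2 E Qh Qs : ℝ}
    (hD0 : 0 ≤ D) (hE0 : 0 ≤ E) (hQh0 : 0 ≤ Qh) (hQs0 : 0 ≤ Qs)
    (hR10 : 0 ≤ R1) (hR20 : 0 ≤ R2)
    (h1 : D ≤ β + R1) (h2 : D ≤ δ + R2)
    (hR1 : R1 ^ 2 ≤ (β - δ) ^ 2 + Qh - Qs)
    (hR2 : R2 ^ 2 ≤ (β - δ) ^ 2)
    (hβ : β ^ 2 ≤ E + (2 / 3) * Qh) (hδ : δ ^ 2 ≤ E + (2 / 3) * Qs)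
    (hs2 : Qh + Qs ≤ (β - δ) ^ 2) :
    D ^ 2 ≤ 8 * E + 4 * Qh := by
  rcases le_or_gt δ β with hbd | hbd
  · -- β ≥ δ : D ≤ β
    have hR2' : R2 ≤ β - δ := by
      by_contra hc
      push_neg at hc
      nlinarith [mul_self_lt_mul_self (by linarith : (0:ℝ) ≤ β - δ) hc]
    have hDβ : D ≤ β := by linarith
    nlinarith [mul_self_le_mul_self hD0 hDβ]
  · rcases le_or_gt δ 0 with hd0 | hd0
    · -- δ ≤ 0 : D ≤ -β
      have hR2' : R2 ≤ δ - β := by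
        by_contra hc
        push_neg at hc
        nlinarith [mul_self_lt_mul_self (by linarith : (0:ℝ) ≤ δ - β) hc]
      have hDβ : D ≤ -β := by linarith
      nlinarith [mul_self_le_mul_self hD0 hDβ]
    · -- β < δ, 0 < δ
      have hs0 : 0 < δ - β := by linarith
      have key : 2 * (δ - β) * D ≤ 2 * (δ - β) * δ + Qh - Qs := by
        nlinarith [sq_nonneg ((δ - β) - R1),
          mul_le_mul_of_nonneg_left h1 (by linarith : (0:ℝ) ≤ 2 * (δ - β))]
      rcases le_or_gt Qs Qh with hqq | hqq
      · -- Qs ≤ Qh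
        rcases le_or_gt D δ with hDd | hDd
        · nlinarith [mul_self_le_mul_self hD0 hDd]
        · have hu : 2 * (δ - β) * (D - δ) ≤ Qh := by nlinarith
          have h0' : 0 ≤ 2 * (δ - β) * (D - δ) :=
            mul_nonneg (by linarith) (by linarith)
          have hQs2 : Qh ≤ (δ - β) ^ 2 := by nlinarith
          have e1 : (2 * (δ - β) * (D - δ)) * (2 * (δ - β) * (D - δ)) ≤ Qh * Qh :=
            mul_self_le_mul_self h0' hu
          have e2 : Qh * Qh ≤ Qh * (δ - β) ^ 2 :=
            mul_le_mul_of_nonneg_left hQs2 hQh0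
          have hcancel : (δ - β) ^ 2 * (4 * (D - δ) ^ 2) ≤ (δ - β) ^ 2 * Qh := by
            nlinarith [e1, e2]
          have h4u : 4 * (D - δ) ^ 2 ≤ Qh :=
            le_of_mul_le_mul_left hcancel (by positivity)
          have hDδ2 : D ^ 2 ≤ (4 / 3) * δ ^ 2 + Qh := by
            nlinarith [sq_nonneg (δ - 3 * (D - δ)), h4u]
          linarith
      · -- Qh < Qs
        have hM0 : (0:ℝ) ≤ E + (2 / 3) * Qh := by linarith
        set r : ℝ := Real.sqrt (E + (2 / 3) * Qh) with hrdef
        have hr0 : 0 ≤ r := Real.sqrt_nonneg _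
        have hr2 : r ^ 2 = E + (2 / 3) * Qh := Real.sq_sqrt hM0
        have hβr : -r ≤ β := by
          by_contra hc
          push_neg at hc
          have h1' : r < -β := by linarith
          nlinarith [mul_self_lt_mul_self hr0 h1']
        have hsr : δ - β ≤ δ + r := by linarith
        rcases le_or_gt δ (2 * r) with hd2 | hd2
        · have hDd : D ≤ δ := by nlinarith
          nlinarith [mul_self_le_mul_self hD0 hDd]
        · have hq3 : (3 / 2) * (δ ^ 2 - r ^ 2) ≤ Qs - Qh := by nlinarith
          have hslow : (3 / 2) * (δ - r) ≤ δ - β := by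
            have hss : (δ - β) * (δ - β) ≤ (δ - β) * (δ + r) :=
              mul_le_mul_of_nonneg_left hsr hs0.le
            nlinarith
          have hd5 : δ ≤ 5 * r := by linarith
          have h2sd : 2 * (δ - β) * D ≤ 4 * (δ - β) * r := by
            nlinarith [mul_nonneg (by linarith : (0:ℝ) ≤ δ + r - (δ - β))
                (by linarith : (0:ℝ) ≤ 2 * δ - 4 * r),
              mul_nonneg (by linarith : (0:ℝ) ≤ 5 * r - δ)
                (by linarith : (0:ℝ) ≤ δ + r)]
          have hD2r : D ≤ 2 * r := by
            by_contra hc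
            push_neg at hc
            nlinarith [mul_pos hs0 (by linarith : (0:ℝ) < D - 2 * r)]
          nlinarith [mul_self_le_mul_self hD0 hD2r]

set_option maxHeartbeats 1000000 in
/-- **Key argument of the Goldenshluger–Lepski-type bandwidth selection.**
Let `ℋ` be a finite set of bandwidths, and for `h ∈ ℋ` let `f̂_h(t)`, `f_h(t)`,
`V̂(h) ≥ 0`, `V(h) ≥ 0` be given. With
`Â(h) = max_{η ∈ ℋ, η ≤ h} (|f̂_h(t) − f̂_η(t)|² − (V̂(h) + V̂(η)))₊` and
`ĥ ∈ argmin_{h ∈ ℋ} (Â(h) + V̂(h))`, one has for every `h ∈ ℋ`: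
`|f̂_ĥ(t) − f(t)|² ≤ 16·bias²(h) + (4/3)V(h) + 4V̂(h)
  + 28·max_{η ∈ ℋ}(|f_η(t) − f̂_η(t)|² − V(η)/3)₊ + 8·max_{η ∈ ℋ}(V(η) − V̂(η))₊`,
where `bias²(h) = sup_{η ∈ ℋ, η ≤ h} |f_η(t) − f(t)|²`. -/
theorem key_argument
    (H : Finset ℝ) (fhat fdet Vhat V : ℝ → ℝ) (ft : ℝ)
    (hVhat : ∀ h ∈ H, 0 ≤ Vhat h) (hV : ∀ h ∈ H, 0 ≤ V h)
    (A : ℝ → ℝ)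
    (hA : ∀ h ∈ H, A h = sSup {y | ∃ η ∈ H, η ≤ h ∧
      y = max (|fhat h - fhat η| ^ 2 - (Vhat h + Vhat η)) 0})
    (hhat : ℝ) (hhatH : hhat ∈ H)
    (hmin : ∀ h ∈ H, A hhat + Vhat hhat ≤ A h + Vhat h)
    (h : ℝ) (hH : h ∈ H) :
    |fhat hhat - ft| ^ 2
      ≤ 16 * sSup {y | ∃ η ∈ H, η ≤ h ∧ y = |fdet η - ft| ^ 2}
        + (4 / 3) * V h + 4 * Vhat h
        + 28 * sSup {y | ∃ η ∈ H, y = max (|fdet η - fhat η| ^ 2 - V η / 3) 0}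
        + 8 * sSup {y | ∃ η ∈ H, y = max (V η - Vhat η) 0} := by
  have hfinB : ({y | ∃ η ∈ H, η ≤ h ∧ y = |fdet η - ft| ^ 2}).Finite := by
    apply Set.Finite.subset (Set.Finite.image (fun η => |fdet η - ft| ^ 2) H.finite_toSet)
    rintro y ⟨η, hη, -, rfl⟩
    exact ⟨η, hη, rfl⟩
  have hfinXi : ({y | ∃ η ∈ H, y = max (|fdet η - fhat η| ^ 2 - V η / 3) 0}).Finite := by
    apply Set.Finite.subset
      (Set.Finite.image (fun η => max (|fdet η - fhat η| ^ 2 - V η / 3) 0) H.finite_toSet)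
    rintro y ⟨η, hη, rfl⟩
    exact ⟨η, hη, rfl⟩
  have hfinW : ({y | ∃ η ∈ H, y = max (V η - Vhat η) 0}).Finite := by
    apply Set.Finite.subset (Set.Finite.image (fun η => max (V η - Vhat η) 0) H.finite_toSet)
    rintro y ⟨η, hη, rfl⟩
    exact ⟨η, hη, rfl⟩
  have hfinA : ∀ h' : ℝ, ({y | ∃ η ∈ H, η ≤ h' ∧
      y = max (|fhat h' - fhat η| ^ 2 - (Vhat h' + Vhat η)) 0}).Finite := by
    intro h'
    apply Set.Finite.subset
      (Set.Finite.image (fun η => max (|fhat h' - fhat η| ^ 2 - (Vhat h' + Vhat η)) 0)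
        H.finite_toSet)
    rintro y ⟨η, hη, -, rfl⟩
    exact ⟨η, hη, rfl⟩
  set B := sSup {y | ∃ η ∈ H, η ≤ h ∧ y = |fdet η - ft| ^ 2} with hBdef
  set Xi := sSup {y | ∃ η ∈ H, y = max (|fdet η - fhat η| ^ 2 - V η / 3) 0} with hXidef
  set W := sSup {y | ∃ η ∈ H, y = max (V η - Vhat η) 0} with hWdef
  have hB : ∀ η ∈ H, η ≤ h → (fdet η - ft) ^ 2 ≤ B := by
    intro η hη hle
    have hle2 : |fdet η - ft| ^ 2 ≤ B := le_csSup hfinB.bddAbove ⟨η, hη, hle, rfl⟩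
    rwa [sq_abs] at hle2
  have hB0 : 0 ≤ B := le_trans (sq_nonneg _) (hB h hH le_rfl)
  have hXi : ∀ η ∈ H, (fdet η - fhat η) ^ 2 - V η / 3 ≤ Xi := by
    intro η hη
    have hmem : max (|fdet η - fhat η| ^ 2 - V η / 3) 0 ≤ Xi :=
      le_csSup hfinXi.bddAbove ⟨η, hη, rfl⟩
    rw [sq_abs] at hmem
    exact le_trans (le_max_left _ _) hmem
  have hXi0 : 0 ≤ Xi := by
    have hmem : max (|fdet h - fhat h| ^ 2 - V h / 3) 0 ≤ Xi :=
      le_csSup hfinXi.bddAbove ⟨h, hH, rfl⟩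
    exact le_trans (le_max_right _ _) hmem
  have hW : ∀ η ∈ H, V η - Vhat η ≤ W := by
    intro η hη
    have hmem : max (V η - Vhat η) 0 ≤ W := le_csSup hfinW.bddAbove ⟨η, hη, rfl⟩
    exact le_trans (le_max_left _ _) hmem
  have hW0 : 0 ≤ W := by
    have hmem : max (V h - Vhat h) 0 ≤ W := le_csSup hfinW.bddAbove ⟨h, hH, rfl⟩
    exact le_trans (le_max_right _ _) hmem
  have hAge : ∀ h' ∈ H, ∀ η ∈ H, η ≤ h' →
      (fhat h' - fhat η) ^ 2 - (Vhat h' + Vhat η) ≤ A h' := by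
    intro h' hh' η hη hle
    rw [hA h' hh']
    have hmem : max (|fhat h' - fhat η| ^ 2 - (Vhat h' + Vhat η)) 0 ≤
        sSup {y | ∃ η ∈ H, η ≤ h' ∧ y = max (|fhat h' - fhat η| ^ 2 - (Vhat h' + Vhat η)) 0} :=
      le_csSup (hfinA h').bddAbove ⟨η, hη, hle, rfl⟩
    rw [sq_abs] at hmem
    exact le_trans (le_max_left _ _) hmem
  have hAnonneg : ∀ h' ∈ H, 0 ≤ A h' := by
    intro h' hh'
    rw [hA h' hh']
    have hmem : max (|fhat h' - fhat h'| ^ 2 - (Vhat h' + Vhat h')) 0 ≤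
        sSup {y | ∃ η ∈ H, η ≤ h' ∧ y = max (|fhat h' - fhat η| ^ 2 - (Vhat h' + Vhat η)) 0} :=
      le_csSup (hfinA h').bddAbove ⟨h', hh', le_rfl, rfl⟩
    exact le_trans (le_max_right _ _) hmem
  have hmin' := hmin h hH
  have hVh0 := hV h hH
  have hVhath0 := hVhat h hH
  rcases le_total hhat h with hcase | hcase
  · -- EASY CASE : hhat ≤ h
    have hAhle : A h ≤ 6 * Xi + 12 * B + 2 * W := by
      rw [hA h hH]
      refine csSup_le ⟨_, ⟨h, hH, le_rfl, rfl⟩⟩ ?_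
      rintro y ⟨η, hη, hle, rfl⟩
      have e1 := hXi h hH
      have e2 := hXi η hη
      have b1 := hB h hH le_rfl
      have b2 := hB η hη hle
      have w1 := hW h hH
      have w2 := hW η hη
      have v1 := hVhat η hη
      have hcauchy : (fhat h - fhat η) ^ 2 ≤ 3 * (fdet h - fhat h) ^ 2
          + 3 * (fdet η - fhat η) ^ 2 + 6 * (fdet h - ft) ^ 2 + 6 * (fdet η - ft) ^ 2 := by
        nlinarith [sq_nonneg ((fdet η - fhat η) - (fdet h - fhat h)
            - 2 * ((fdet h - ft) - (fdet η - ft))),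
          sq_nonneg ((fdet η - fhat η) + (fdet h - fhat h)),
          sq_nonneg ((fdet h - ft) + (fdet η - ft))]
      refine max_le ?_ (by linarith)
      rw [sq_abs]
      linarith
    have e1 := hXi hhat hhatH
    have b1 := hB hhat hhatH hcase
    have w1 := hW hhat hhatH
    have hAhhat0 := hAnonneg hhat hhatH
    have tri : (fhat hhat - ft) ^ 2 ≤
        2 * (fdet hhat - fhat hhat) ^ 2 + 2 * (fdet hhat - ft) ^ 2 := by
      nlinarith [sq_nonneg ((fdet hhat - fhat hhat) + (fdet hhat - ft))]
    rw [sq_abs]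
    linarith
  · -- HARD CASE : h ≤ hhat
    have pair_h : (fhat hhat - fhat h) ^ 2 ≤ A hhat + Vhat hhat + Vhat h := by
      have := hAge hhat hhatH h hH hcase
      linarith
    rcases le_or_gt (A h) 0 with hAh0 | hAh0
    · -- A h ≤ 0
      have hab : (fhat hhat - fhat h) ^ 2 ≤ 2 * Vhat h := by linarith
      have e1 := hXi h hH
      have b1 := hB h hH le_rfl
      have tri : (fhat hhat - ft) ^ 2 ≤ 2 * (fhat hhat - fhat h) ^ 2
          + 4 * (fdet h - fhat h) ^ 2 + 4 * (fdet h - ft) ^ 2 := by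
        nlinarith [sq_nonneg ((fhat hhat - fhat h) + (fdet h - fhat h) - (fdet h - ft)),
          sq_nonneg ((fdet h - fhat h) + (fdet h - ft))]
      rw [sq_abs]
      linarith
    · -- A h > 0 : obtain the maximizer η*
      have hmem : A h ∈ {y | ∃ η ∈ H, η ≤ h ∧
          y = max (|fhat h - fhat η| ^ 2 - (Vhat h + Vhat η)) 0} := by
        rw [hA h hH]
        exact Set.Nonempty.csSup_mem
          ⟨max (|fhat h - fhat h| ^ 2 - (Vhat h + Vhat h)) 0, ⟨h, hH, le_rfl, rfl⟩⟩ (hfinA h)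
      obtain ⟨η, hη, hηle, hAeq⟩ := hmem
      have hAeq' : A h = (fhat h - fhat η) ^ 2 - (Vhat h + Vhat η) := by
        rcases max_cases (|fhat h - fhat η| ^ 2 - (Vhat h + Vhat η)) 0 with ⟨hm, -⟩ | ⟨hm, -⟩
        · rw [hAeq, hm, sq_abs]
        · rw [hAeq, hm] at hAh0
          exact absurd hAh0 (lt_irrefl 0)
      have pair_η : (fhat hhat - fhat η) ^ 2 ≤ A hhat + Vhat hhat + Vhat η := by
        have := hAge hhat hhatH η hη (le_trans hηle hcase)
        linarith
      have hVhatη0 := hVhat η hη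
      have hR1' : (fhat hhat - fhat h) ^ 2 ≤ (fhat h - fhat η) ^ 2 + Vhat h - Vhat η := by
        linarith
      have hR2' : (fhat hhat - fhat η) ^ 2 ≤ (fhat h - fhat η) ^ 2 := by linarith
      have hs2' : Vhat h + Vhat η ≤ (fhat h - fhat η) ^ 2 := by linarith
      have hβ' : (fhat h - ft) ^ 2 ≤ (2 * Xi + 2 * B + (2 / 3) * W) + (2 / 3) * Vhat h := by
        have e1 := hXi h hH
        have b1 := hB h hH le_rfl
        have w1 := hW h hH
        nlinarith [sq_nonneg ((fdet h - fhat h) + (fdet h - ft))]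
      have hδ' : (fhat η - ft) ^ 2 ≤ (2 * Xi + 2 * B + (2 / 3) * W) + (2 / 3) * Vhat η := by
        have e1 := hXi η hη
        have b1 := hB η hη hηle
        have w1 := hW η hη
        nlinarith [sq_nonneg ((fdet η - fhat η) + (fdet η - ft))]
      have hE0' : (0:ℝ) ≤ 2 * Xi + 2 * B + (2 / 3) * W := by linarith
      have habs1 : (0:ℝ) ≤ |fhat hhat - fhat h| := abs_nonneg _
      have habs2 : (0:ℝ) ≤ |fhat hhat - fhat η| := abs_nonneg _
      have hsqabs1 : |fhat hhat - fhat h| ^ 2 = (fhat hhat - fhat h) ^ 2 := sq_abs _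
      have hsqabs2 : |fhat hhat - fhat η| ^ 2 = (fhat hhat - fhat η) ^ 2 := sq_abs _
      have hfinal : (fhat hhat - ft) ^ 2 ≤
          8 * (2 * Xi + 2 * B + (2 / 3) * W) + 4 * Vhat h := by
        rcases le_total ft (fhat hhat) with hsgn | hsgn
        · refine core_lemma (D := fhat hhat - ft) (β := fhat h - ft) (δ := fhat η - ft)
            (R1 := |fhat hhat - fhat h|) (R2 := |fhat hhat - fhat η|)
            (by linarith) hE0' hVhath0 hVhatη0 habs1 habs2 ?_ ?_ ?_ ?_ hβ' hδ' ?_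
          · have := le_abs_self (fhat hhat - fhat h)
            linarith
          · have := le_abs_self (fhat hhat - fhat η)
            linarith
          · rw [hsqabs1, show (fhat h - ft - (fhat η - ft)) ^ 2 = (fhat h - fhat η) ^ 2 by ring]
            linarith
          · rw [hsqabs2, show (fhat h - ft - (fhat η - ft)) ^ 2 = (fhat h - fhat η) ^ 2 by ring]
            linarith
          · rw [show (fhat h - ft - (fhat η - ft)) ^ 2 = (fhat h - fhat η) ^ 2 by ring]
            linarith
        · have hgoal : (ft - fhat hhat) ^ 2 ≤
              8 * (2 * Xi + 2 * B + (2 / 3) * W) + 4 * Vhat h := by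
            refine core_lemma (D := ft - fhat hhat) (β := ft - fhat h) (δ := ft - fhat η)
              (R1 := |fhat hhat - fhat h|) (R2 := |fhat hhat - fhat η|)
              (by linarith) hE0' hVhath0 hVhatη0 habs1 habs2 ?_ ?_ ?_ ?_ ?_ ?_ ?_
            · have := neg_abs_le (fhat hhat - fhat h)
              linarith
            · have := neg_abs_le (fhat hhat - fhat η)
              linarith
            · rw [hsqabs1, show (ft - fhat h - (ft - fhat η)) ^ 2 = (fhat h - fhat η) ^ 2 by ring]
              linarith
            · rw [hsqabs2, show (ft - fhat h - (ft - fhat η)) ^ 2 = (fhat h - fhat η) ^ 2 by ring]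
              linarith
            · rw [show (ft - fhat h) ^ 2 = (fhat h - ft) ^ 2 by ring]
              exact hβ'
            · rw [show (ft - fhat η) ^ 2 = (fhat η - ft) ^ 2 by ring]
              exact hδ'
            · rw [show (ft - fhat h - (ft - fhat η)) ^ 2 = (fhat h - fhat η) ^ 2 by ring]
              linarith
          nlinarith [hgoal]
      rw [sq_abs]
      linarith
end
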